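/- Consider the finite-volume Ising model on a finite set Λ ⊂ ℤ^d containing the origin o, with inverse temperature β ≥ 0 and ferromagnetic couplings J ≥ 0. Then for every x ∈ Λ with x ≠ o: tanh(β J_{o,x}) ≤ ⟨φ_o φ_x⟩_{β,Λ} ≤ ∑_{y ∈ Λ, y ≠ o} tanh(β J_{o,y}) ⟨φ_y φ_x⟩_{β,Λ}. -/

import Mathlib

open scoped BigOperators ENNReal
open Filter

noncomputable section

namespace LongRange

abbrev V (d : ℕ) : Type := Fin d → ℤ

variable {d : ℕ}

def nrm (x : V d) : ℝ := Real.sqrt (∑ i, ((x i : ℝ)) ^ 2)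

/-- The spin value attached to a Boolean. -/
def spin (b : Bool) : ℝ := if b then 1 else -1

/-- The Ising Hamiltonian on the finite volume `Λ` with couplings `J`
(free boundary condition); the sum over unordered pairs of distinct
vertices is written as half the sum over ordered pairs. -/
def isingH (Λ : Finset (V d)) (J : V d → V d → ℝ) (φ : ↥Λ → Bool) : ℝ :=
  -(1 / 2) * ∑ u : ↥Λ, ∑ v : ↥Λ,
      if u.1 ≠ v.1 then J u.1 v.1 * spin (φ u) * spin (φ v) else 0

/-- The finite-volume Ising two-point function `⟨φ_a φ_b⟩_{β,Λ}`. -/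
def corr (Λ : Finset (V d)) (β : ℝ) (J : V d → V d → ℝ) (a b : ↥Λ) : ℝ :=
  (∑ φ : ↥Λ → Bool, spin (φ a) * spin (φ b) * Real.exp (-(β * isingH Λ J φ))) /
    ∑ φ : ↥Λ → Bool, Real.exp (-(β * isingH Λ J φ))


/-!
Both bounds rest on `exp (c σ σ') = cosh c (1 + tanh c σ σ')` for spins `σ, σ' = ±1` and on
Griffiths' first inequality: every unnormalised moment `Z ⟨∏ σ_i⟩` of a ferromagnet is `≥ 0`,
because expanding each bond this way leaves a positive combination of free moments.

Lower bound: removing the bond `{o, x}` gives `Z = cosh (Z' + t S')` and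
`Z ⟨σ_o σ_x⟩ = cosh (S' + t Z')`, where `t = tanh (β J_{ox})` and `Z'`, `S' ≥ 0` are the
corresponding sums without the bond, so
`Z (⟨σ_o σ_x⟩ - t) = cosh (1 - t²) S' ≥ 0`.

Upper bound: removing all bonds at `o` and expanding writes `Z ⟨σ_o σ_x⟩` as a sum over sets `T`
of sites of nonnegative terms `w T`, where `w ∅ = 0` because `σ_o` has become a free spin
appearing once. Bounding `w T ≤ |T| w T` and splitting off one `y ∈ T` turns the sum into part of
the same expansion of `∑_y tanh (β J_{oy}) Z ⟨σ_y σ_x⟩`, whose remaining terms are `≥ 0`.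
-/

lemma spin_mul_self (b : Bool) : spin b * spin b = 1 := by
  cases b <;> norm_num [spin]

lemma spin_not (b : Bool) : spin (!b) = -spin b := by
  cases b <;> simp [spin]

lemma tanh_nonneg {x : ℝ} (hx : 0 ≤ x) : 0 ≤ Real.tanh x := by
  rw [Real.tanh_eq_sinh_div_cosh]
  exact div_nonneg (Real.sinh_nonneg_iff.mpr hx) (Real.cosh_pos x).le

lemma exp_mul_spin_mul_spin (c : ℝ) (a b : Bool) :
    Real.exp (c * (spin a * spin b)) = Real.cosh c * (1 + Real.tanh c * (spin a * spin b)) := by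
  have hc := (Real.cosh_pos c).ne'
  rw [Real.tanh_eq_sinh_div_cosh, mul_add, mul_one, ← mul_assoc (Real.cosh c), mul_div_cancel₀ _ hc]
  cases a <;> cases b <;> simp [spin, ← Real.cosh_add_sinh]

section Monomial

variable {ι : Type*}

def spinMonomial (m : Multiset ι) (φ : ι → Bool) : ℝ := (m.map fun i => spin (φ i)).prod

@[simp] lemma spinMonomial_zero (φ : ι → Bool) : spinMonomial 0 φ = 1 := rfl

@[simp] lemma spinMonomial_cons (a : ι) (m : Multiset ι) (φ : ι → Bool) :
    spinMonomial (a ::ₘ m) φ = spin (φ a) * spinMonomial m φ := by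
  simp [spinMonomial]

lemma spinMonomial_add (m₁ m₂ : Multiset ι) (φ : ι → Bool) :
    spinMonomial (m₁ + m₂) φ = spinMonomial m₁ φ * spinMonomial m₂ φ := by
  simp [spinMonomial]

lemma spinMonomial_cons_cons_self (a : ι) (m : Multiset ι) (φ : ι → Bool) :
    spinMonomial (a ::ₘ a ::ₘ m) φ = spinMonomial m φ := by
  rw [spinMonomial_cons, spinMonomial_cons, ← mul_assoc, spin_mul_self, one_mul]

lemma spinMonomial_bind_pair (o : ι) (T : Finset ι) (φ : ι → Bool) :
    spinMonomial (T.val.bind fun y => {o, y}) φ = ∏ y ∈ T, spin (φ o) * spin (φ y) := by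
  rw [spinMonomial, Multiset.map_bind, Multiset.prod_bind, Finset.prod_eq_multiset_prod]
  simp

lemma spinMonomial_update_not [DecidableEq ι] (o : ι) (m : Multiset ι) (φ : ι → Bool) :
    spinMonomial m (Function.update φ o (!φ o)) = (-1) ^ m.count o * spinMonomial m φ := by
  induction m using Multiset.induction_on with
  | empty => simp
  | cons a m ih =>
    rcases eq_or_ne a o with rfl | hao
    · simp only [spinMonomial_cons, Function.update_self, spin_not, ih, Multiset.count_cons_self,
        pow_succ]
      ring
    · simp only [spinMonomial_cons, Function.update_of_ne hao, ih,
        Multiset.count_cons_of_ne hao.symm]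
      ring

lemma spinMonomial_eq_prod_pow_count [Fintype ι] [DecidableEq ι] (m : Multiset ι)
    (φ : ι → Bool) : spinMonomial m φ = ∏ i, spin (φ i) ^ m.count i := by
  rw [spinMonomial, Finset.prod_multiset_map_count]
  refine Finset.prod_subset (Finset.subset_univ _) fun i _ hi => ?_
  rw [Multiset.count_eq_zero.mpr (by simpa using hi), pow_zero]

lemma sum_spinMonomial_nonneg [Fintype ι] [DecidableEq ι] (m : Multiset ι) :
    0 ≤ ∑ φ : ι → Bool, spinMonomial m φ := by
  simp_rw [spinMonomial_eq_prod_pow_count]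
  rw [← Fintype.prod_sum fun i b => spin b ^ m.count i]
  refine Finset.prod_nonneg fun i _ => ?_
  rcases Nat.even_or_odd (m.count i) with h | h <;> simp [spin, h.neg_one_pow]

end Monomial

section Moment

variable {ι : Type*} [Fintype ι] [DecidableEq ι]

def energy (K : ι → ι → ℝ) (φ : ι → Bool) : ℝ :=
  ∑ u, ∑ v, K u v * (spin (φ u) * spin (φ v))

/-- The unnormalised expectation `Z ⟨∏_{i ∈ m} σ_i⟩` of the Ising model with couplings `K`
over ordered pairs, i.e. with weight `exp (β/2 ∑_{u,v} K u v σ_u σ_v)`. -/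
def spinMoment (β : ℝ) (K : ι → ι → ℝ) (m : Multiset ι) : ℝ :=
  ∑ φ : ι → Bool, spinMonomial m φ * Real.exp (β / 2 * energy K φ)

lemma sum_spinMonomial_mul_prod_exp_nonneg (c : ι × ι → ℝ) (hc : ∀ p, 0 ≤ c p)
    (B : Finset (ι × ι)) (m : Multiset ι) :
    0 ≤ ∑ φ : ι → Bool,
      spinMonomial m φ * ∏ p ∈ B, Real.exp (c p * (spin (φ p.1) * spin (φ p.2))) := by
  induction B using Finset.induction_on generalizing m with
  | empty => simpa using sum_spinMonomial_nonneg m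
  | insert p B hpB ih =>
    have hexpand : ∀ φ : ι → Bool,
        spinMonomial m φ * ∏ q ∈ insert p B, Real.exp (c q * (spin (φ q.1) * spin (φ q.2))) =
          Real.cosh (c p) *
            (spinMonomial m φ * ∏ q ∈ B, Real.exp (c q * (spin (φ q.1) * spin (φ q.2))) +
              Real.tanh (c p) * (spinMonomial (p.1 ::ₘ p.2 ::ₘ m) φ *
                ∏ q ∈ B, Real.exp (c q * (spin (φ q.1) * spin (φ q.2))))) := by
      intro φ
      rw [Finset.prod_insert hpB, exp_mul_spin_mul_spin, spinMonomial_cons, spinMonomial_cons]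
      ring
    simp_rw [hexpand, ← Finset.mul_sum, Finset.sum_add_distrib, ← Finset.mul_sum]
    exact mul_nonneg (Real.cosh_pos _).le
      (add_nonneg (ih m) (mul_nonneg (tanh_nonneg (hc p)) (ih _)))

/-- Griffiths' first inequality. -/
theorem spinMoment_nonneg {β : ℝ} (hβ : 0 ≤ β) {K : ι → ι → ℝ} (hK : ∀ u v, 0 ≤ K u v)
    (m : Multiset ι) : 0 ≤ spinMoment β K m := by
  have hweight : ∀ φ : ι → Bool, Real.exp (β / 2 * energy K φ) =
      ∏ p : ι × ι, Real.exp (β / 2 * K p.1 p.2 * (spin (φ p.1) * spin (φ p.2))) := by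
    intro φ
    rw [← Real.exp_sum, Fintype.sum_prod_type, energy, Finset.mul_sum]
    simp_rw [Finset.mul_sum, mul_assoc]
  simp_rw [spinMoment, hweight]
  exact sum_spinMonomial_mul_prod_exp_nonneg _ (fun p => mul_nonneg (by positivity) (hK _ _)) _ m

lemma spinMoment_cons_cons_self (β : ℝ) (K : ι → ι → ℝ) (a : ι) (m : Multiset ι) :
    spinMoment β K (a ::ₘ a ::ₘ m) = spinMoment β K m := by
  simp_rw [spinMoment, spinMonomial_cons_cons_self]

lemma energy_update_not {K : ι → ι → ℝ} {o : ι} (hKo : ∀ v, K o v = 0) (hKo' : ∀ u, K u o = 0)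
    (φ : ι → Bool) : energy K (Function.update φ o (!φ o)) = energy K φ := by
  refine Finset.sum_congr rfl fun u _ => Finset.sum_congr rfl fun v _ => ?_
  rcases eq_or_ne u o with rfl | hu
  · simp [hKo]
  rcases eq_or_ne v o with rfl | hv
  · simp [hKo']
  simp [Function.update_of_ne hu, Function.update_of_ne hv]

lemma spinMoment_eq_zero_of_odd_count (β : ℝ) {K : ι → ι → ℝ} {o : ι} (hKo : ∀ v, K o v = 0)
    (hKo' : ∀ u, K u o = 0) {m : Multiset ι} (hm : Odd (m.count o)) : spinMoment β K m = 0 := by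
  have hflip : Function.Involutive fun φ : ι → Bool => Function.update φ o (!φ o) := by
    intro φ
    simp
  have h := Equiv.sum_comp hflip.toPerm
    fun φ => spinMonomial m φ * Real.exp (β / 2 * energy K φ)
  simp only [Function.Involutive.coe_toPerm, spinMonomial_update_not,
    energy_update_not hKo hKo', hm.neg_one_pow, neg_mul, one_mul, Finset.sum_neg_distrib] at h
  rw [spinMoment]
  linarith

end Moment

section Expansion

variable {ι : Type*} [Fintype ι] [DecidableEq ι]

def removeBond (K : ι → ι → ℝ) (a b : ι) : ι → ι → ℝ :=
  fun u v => if s(u, v) = s(a, b) then 0 else K u v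

lemma energy_eq_energy_removeBond {K : ι → ι → ℝ} (hKs : ∀ u v, K u v = K v u) {a b : ι}
    (hab : a ≠ b) (φ : ι → Bool) :
    energy K φ = energy (removeBond K a b) φ + 2 * K a b * (spin (φ a) * spin (φ b)) := by
  have hsplit : ∀ u v, K u v * (spin (φ u) * spin (φ v)) =
      removeBond K a b u v * (spin (φ u) * spin (φ v)) +
        ((if u = a ∧ v = b then K a b * (spin (φ a) * spin (φ b)) else 0) +
          (if u = b ∧ v = a then K a b * (spin (φ a) * spin (φ b)) else 0)) := by
    intro u v
    rcases em (u = a ∧ v = b) with ⟨rfl, rfl⟩ | h₁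
    · simp [removeBond, hab]
    rcases em (u = b ∧ v = a) with ⟨rfl, rfl⟩ | h₂
    · rw [removeBond, if_pos Sym2.eq_swap, if_neg (fun h => hab h.1.symm), if_pos ⟨rfl, rfl⟩, hKs]
      ring
    rw [removeBond, if_neg (by rw [Sym2.eq_iff]; tauto), if_neg h₁, if_neg h₂]
    ring
  rw [energy, Finset.sum_congr rfl fun u _ => Finset.sum_congr rfl fun v _ => hsplit u v]
  simp only [Finset.sum_add_distrib, ite_and, Finset.sum_ite_irrel, Finset.sum_const_zero,
    Finset.sum_ite_eq', Finset.mem_univ, if_true]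
  rw [energy]
  ring

lemma spinMoment_eq_removeBond (β : ℝ) {K : ι → ι → ℝ} (hKs : ∀ u v, K u v = K v u) {a b : ι}
    (hab : a ≠ b) (m : Multiset ι) :
    spinMoment β K m = Real.cosh (β * K a b) * (spinMoment β (removeBond K a b) m +
      Real.tanh (β * K a b) * spinMoment β (removeBond K a b) (a ::ₘ b ::ₘ m)) := by
  have hweight : ∀ φ : ι → Bool, Real.exp (β / 2 * energy K φ) =
      Real.cosh (β * K a b) * (1 + Real.tanh (β * K a b) * (spin (φ a) * spin (φ b))) *
        Real.exp (β / 2 * energy (removeBond K a b) φ) := by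
    intro φ
    rw [energy_eq_energy_removeBond hKs hab, ← exp_mul_spin_mul_spin, ← Real.exp_add]
    congr 1
    ring
  rw [spinMoment, spinMoment, spinMoment, Finset.mul_sum, ← Finset.sum_add_distrib, Finset.mul_sum]
  refine Finset.sum_congr rfl fun φ _ => ?_
  rw [hweight, spinMonomial_cons, spinMonomial_cons]
  ring

theorem tanh_mul_spinMoment_zero_le {β : ℝ} (hβ : 0 ≤ β) {K : ι → ι → ℝ}
    (hK : ∀ u v, 0 ≤ K u v) (hKs : ∀ u v, K u v = K v u) {o x : ι} (hox : o ≠ x) :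
    Real.tanh (β * K o x) * spinMoment β K 0 ≤ spinMoment β K {o, x} := by
  have hK' : ∀ u v, 0 ≤ removeBond K o x u v := fun u v => by
    unfold removeBond; split_ifs <;> simp [hK]
  have hZ := spinMoment_eq_removeBond β hKs hox 0
  have hN := spinMoment_eq_removeBond β hKs hox {o, x}
  rw [show o ::ₘ x ::ₘ ({o, x} : Multiset ι) = o ::ₘ o ::ₘ x ::ₘ x ::ₘ 0 from
      congrArg _ (Multiset.cons_swap _ _ _), spinMoment_cons_cons_self,
    spinMoment_cons_cons_self] at hN
  rw [show (o ::ₘ x ::ₘ 0 : Multiset ι) = {o, x} from rfl] at hZ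
  have ht : Real.tanh (β * K o x) ^ 2 ≤ 1 := (Real.tanh_sq_lt_one _).le
  have hS := spinMoment_nonneg hβ hK' {o, x}
  have hc := (Real.cosh_pos (β * K o x)).le
  rw [hZ, hN]
  nlinarith [mul_nonneg hc (mul_nonneg (sub_nonneg.mpr ht) hS)]

end Expansion

section Decouple

variable {ι : Type*} [Fintype ι] [DecidableEq ι]

def decouple (K : ι → ι → ℝ) (o : ι) : ι → ι → ℝ :=
  fun u v => if u = o ∨ v = o then 0 else K u v

lemma energy_eq_energy_decouple {K : ι → ι → ℝ} (hKs : ∀ u v, K u v = K v u) {o : ι}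
    (hKoo : K o o = 0) (φ : ι → Bool) :
    energy K φ = energy (decouple K o) φ + 2 * ∑ y, K o y * (spin (φ o) * spin (φ y)) := by
  have hsplit : ∀ u v, K u v * (spin (φ u) * spin (φ v)) =
      decouple K o u v * (spin (φ u) * spin (φ v)) +
        ((if u = o then K o v * (spin (φ o) * spin (φ v)) else 0) +
          (if v = o then K o u * (spin (φ o) * spin (φ u)) else 0)) := by
    intro u v
    rcases eq_or_ne u o with rfl | hu
    · rcases eq_or_ne v u with rfl | hv
      · simp [decouple, hKoo]
      · simp [decouple, hv]
    rcases eq_or_ne v o with rfl | hv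
    · simp [decouple, hu, hKs u v, mul_comm (spin (φ u))]
    simp [decouple, hu, hv]
  rw [energy, Finset.sum_congr rfl fun u _ => Finset.sum_congr rfl fun v _ => hsplit u v]
  simp only [Finset.sum_add_distrib, Finset.sum_ite_irrel, Finset.sum_const_zero,
    Finset.sum_ite_eq', Finset.mem_univ, if_true]
  rw [energy]
  ring

/-- Multiply out `∏_y exp (β K o y σ_o σ_y) = ∏_y cosh (β K o y) (1 + tanh (β K o y) σ_o σ_y)`. -/
lemma spinMoment_eq_sum_decouple (β : ℝ) {K : ι → ι → ℝ} (hKs : ∀ u v, K u v = K v u) {o : ι}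
    (hKoo : K o o = 0) (m : Multiset ι) :
    spinMoment β K m = (∏ y, Real.cosh (β * K o y)) * ∑ T : Finset ι,
      (∏ y ∈ T, Real.tanh (β * K o y)) *
        spinMoment β (decouple K o) ((T.val.bind fun y => {o, y}) + m) := by
  have hweight : ∀ φ : ι → Bool, Real.exp (β / 2 * energy K φ) =
      (∏ y, Real.cosh (β * K o y)) * ∑ T : Finset ι, (∏ y ∈ T, Real.tanh (β * K o y)) *
        spinMonomial (T.val.bind fun y => {o, y}) φ *
          Real.exp (β / 2 * energy (decouple K o) φ) := by
    intro φ
    have hstar : β / 2 * (2 * ∑ y, K o y * (spin (φ o) * spin (φ y))) =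
        ∑ y, β * K o y * (spin (φ o) * spin (φ y)) := by
      rw [Finset.mul_sum, Finset.mul_sum]
      exact Finset.sum_congr rfl fun y _ => by ring
    rw [energy_eq_energy_decouple hKs hKoo, mul_add, Real.exp_add, hstar, Real.exp_sum]
    simp_rw [exp_mul_spin_mul_spin, Finset.prod_mul_distrib, Finset.prod_one_add,
      Finset.powerset_univ, spinMonomial_bind_pair, Finset.mul_sum]
    refine Finset.sum_congr rfl fun T _ => ?_
    rw [Finset.prod_mul_distrib]
    ring
  simp_rw [spinMoment, hweight, Finset.mul_sum, spinMonomial_add]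
  rw [Finset.sum_comm]
  exact Finset.sum_congr rfl fun T _ => Finset.sum_congr rfl fun φ _ => by ring

lemma sum_sum_compl_insert {M : Type*} [AddCommMonoid M] (f : Finset ι → M) :
    ∑ T : Finset ι, ∑ y ∈ Tᶜ, f (insert y T) = ∑ T : Finset ι, ∑ _y ∈ T, f T := by
  rw [Finset.sum_sigma', Finset.sum_sigma']
  refine Finset.sum_nbij' (fun p => ⟨insert p.2 p.1, p.2⟩) (fun p => ⟨p.1.erase p.2, p.2⟩)
    ?_ ?_ ?_ ?_ fun _ _ => rfl
  · rintro ⟨T, y⟩ _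
    simp
  · rintro ⟨T, y⟩ _
    simp
  · rintro ⟨T, y⟩ h
    simp_all
  · rintro ⟨T, y⟩ h
    simp_all

lemma sum_le_sum_sum_compl_insert {w : Finset ι → ℝ} (hw : ∀ T, 0 ≤ w T) (hw₀ : w ∅ = 0) :
    ∑ T : Finset ι, w T ≤ ∑ T : Finset ι, ∑ y ∈ Tᶜ, w (insert y T) := by
  rw [sum_sum_compl_insert]
  refine Finset.sum_le_sum fun T _ => ?_
  rcases T.eq_empty_or_nonempty with rfl | hT
  · simp [hw₀]
  · rw [Finset.sum_const, nsmul_eq_mul]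
    exact le_mul_of_one_le_left (hw T) (by exact_mod_cast hT.card_pos)

/-- A Simon–Lieb type inequality. -/
theorem spinMoment_le_sum_tanh_mul {β : ℝ} (hβ : 0 ≤ β) {K : ι → ι → ℝ}
    (hK : ∀ u v, 0 ≤ K u v) (hKs : ∀ u v, K u v = K v u) {o x : ι} (hox : o ≠ x)
    (hKoo : K o o = 0) :
    spinMoment β K {o, x} ≤ ∑ y, Real.tanh (β * K o y) * spinMoment β K {y, x} := by
  set t : ι → ℝ := fun y => Real.tanh (β * K o y)
  set K₀ := decouple K o
  set B : Finset ι → Multiset ι := fun T => T.val.bind fun y => {o, y}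
  set w : Finset ι → ℝ := fun T => (∏ y ∈ T, t y) * spinMoment β K₀ (B T + {o, x})
  have ht : ∀ y, 0 ≤ t y := fun y => tanh_nonneg (mul_nonneg hβ (hK o y))
  have hK₀ : ∀ u v, 0 ≤ K₀ u v := fun u v => by
    simp only [K₀, decouple]; split_ifs <;> simp [hK]
  have hw : ∀ T, 0 ≤ w T := fun T =>
    mul_nonneg (Finset.prod_nonneg fun y _ => ht y) (spinMoment_nonneg hβ hK₀ _)
  have hw_empty : w ∅ = 0 := by
    have : spinMoment β K₀ (B ∅ + {o, x}) = 0 :=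
      spinMoment_eq_zero_of_odd_count β (o := o) (fun v => by simp [K₀, decouple])
        (fun u => by simp [K₀, decouple]) (by simp [B, hox])
    simp only [w, this, mul_zero]
  have hw_insert : ∀ T y, y ∉ T →
      w (insert y T) = t y * ((∏ z ∈ T, t z) * spinMoment β K₀ (B T + {y, x})) := by
    intro T y hy
    have hB : B (insert y T) + {o, x} = o ::ₘ o ::ₘ (B T + {y, x}) := by
      simp only [B, Finset.insert_val_of_notMem hy, Multiset.cons_bind, Multiset.insert_eq_cons,
        Multiset.singleton_add, Multiset.cons_add, Multiset.add_cons]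
    simp only [w, Finset.prod_insert hy, hB, spinMoment_cons_cons_self]
    ring
  have hLHS := spinMoment_eq_sum_decouple β hKs hKoo {o, x}
  have hRHS : ∑ y, t y * spinMoment β K {y, x} = (∏ y, Real.cosh (β * K o y)) *
      ∑ T : Finset ι, ∑ y, t y * ((∏ z ∈ T, t z) * spinMoment β K₀ (B T + {y, x})) := by
    simp_rw [spinMoment_eq_sum_decouple β hKs hKoo, Finset.mul_sum]
    rw [Finset.sum_comm]
    exact Finset.sum_congr rfl fun T _ => Finset.sum_congr rfl fun y _ => by ring
  rw [hLHS, hRHS]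
  refine mul_le_mul_of_nonneg_left ?_ (Finset.prod_nonneg fun y _ => (Real.cosh_pos _).le)
  calc ∑ T : Finset ι, w T ≤ ∑ T : Finset ι, ∑ y ∈ Tᶜ, w (insert y T) :=
        sum_le_sum_sum_compl_insert hw hw_empty
    _ ≤ ∑ T : Finset ι, ∑ y, t y * ((∏ z ∈ T, t z) * spinMoment β K₀ (B T + {y, x})) := by
        refine Finset.sum_le_sum fun T _ => ?_
        rw [Finset.sum_congr rfl fun y hy => hw_insert T y (Finset.mem_compl.mp hy)]
        exact Finset.sum_le_sum_of_subset_of_nonneg (Finset.subset_univ _) fun y _ _ =>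
          mul_nonneg (ht y) (mul_nonneg (Finset.prod_nonneg fun z _ => ht z)
            (spinMoment_nonneg hβ hK₀ _))

end Decouple

lemma spinMoment_zero_pos {ι : Type*} [Fintype ι] [DecidableEq ι] (β : ℝ) (K : ι → ι → ℝ) :
    0 < spinMoment β K 0 := by
  simp only [spinMoment, spinMonomial_zero, one_mul]
  exact Finset.sum_pos (fun φ _ => Real.exp_pos _) Finset.univ_nonempty

def isingCoupling (Λ : Finset (V d)) (J : V d → V d → ℝ) : ↥Λ → ↥Λ → ℝ :=
  fun u v => if u.1 ≠ v.1 then J u.1 v.1 else 0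

lemma neg_mul_isingH (Λ : Finset (V d)) (β : ℝ) (J : V d → V d → ℝ) (φ : ↥Λ → Bool) :
    -(β * isingH Λ J φ) = β / 2 * energy (isingCoupling Λ J) φ := by
  have hterm : ∀ u v : ↥Λ, (if u.1 ≠ v.1 then J u.1 v.1 * spin (φ u) * spin (φ v) else 0) =
      isingCoupling Λ J u v * (spin (φ u) * spin (φ v)) := by
    intro u v
    unfold isingCoupling
    split_ifs <;> ring
  simp only [isingH, energy, hterm]
  ring

lemma corr_eq_div (Λ : Finset (V d)) (β : ℝ) (J : V d → V d → ℝ) (a b : ↥Λ) :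
    corr Λ β J a b =
      spinMoment β (isingCoupling Λ J) {a, b} / spinMoment β (isingCoupling Λ J) 0 := by
  simp [corr, spinMoment, neg_mul_isingH, mul_assoc, ← Multiset.cons_zero]

theorem statement7_general (d : ℕ) (Λ : Finset (V d)) (h0 : (0 : V d) ∈ Λ)
    (β : ℝ) (hβ : 0 ≤ β) (J : V d → V d → ℝ)
    (hJ : ∀ u v, 0 ≤ J u v) (hJs : ∀ u v, J u v = J v u)
    (x : V d) (hx : x ∈ Λ) (hxo : x ≠ 0) :
    Real.tanh (β * J 0 x) ≤ corr Λ β J ⟨0, h0⟩ ⟨x, hx⟩ ∧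
    corr Λ β J ⟨0, h0⟩ ⟨x, hx⟩ ≤
      ∑ y ∈ Λ.attach,
        if y.1 ≠ 0 then Real.tanh (β * J 0 y.1) * corr Λ β J y ⟨x, hx⟩ else 0 := by
  set K := isingCoupling Λ J
  have hK : ∀ u v, 0 ≤ K u v := fun u v => by
    simp only [K, isingCoupling]; split_ifs <;> simp [hJ]
  have hKs : ∀ u v, K u v = K v u := fun u v => by
    simp only [K, isingCoupling, ne_comm, hJs]
  have hKo : ∀ y : ↥Λ, y.1 ≠ 0 → K ⟨0, h0⟩ y = J 0 y.1 := fun y hy => if_pos hy.symm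
  have hox : (⟨0, h0⟩ : ↥Λ) ≠ ⟨x, hx⟩ := fun h => hxo (congrArg Subtype.val h).symm
  have hZ := spinMoment_zero_pos β K
  simp only [corr_eq_div]
  constructor
  · rw [le_div_iff₀ hZ, ← hKo ⟨x, hx⟩ hxo]
    exact tanh_mul_spinMoment_zero_le hβ hK hKs hox
  · have hsum : (∑ y ∈ Λ.attach, if y.1 ≠ 0 then
          Real.tanh (β * J 0 y.1) * (spinMoment β K {y, ⟨x, hx⟩} / spinMoment β K 0) else 0) =
        (∑ y, Real.tanh (β * K ⟨0, h0⟩ y) * spinMoment β K {y, ⟨x, hx⟩}) / spinMoment β K 0 := by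
      rw [Finset.sum_div, ← Finset.univ_eq_attach]
      refine Finset.sum_congr rfl fun y _ => ?_
      split_ifs with hy
      · rw [hKo y hy, mul_div_assoc]
      · simp [K, isingCoupling, not_not.mp hy]
    rw [hsum]
    exact div_le_div_of_nonneg_right
      (spinMoment_le_sum_tanh_mul hβ hK hKs hox (by simp [K, isingCoupling])) hZ.le

/-- tanh(βJ_{o,x}) ≤ ⟨φ_o φ_x⟩ ≤ ∑_y tanh(βJ_{o,y}) ⟨φ_y φ_x⟩. -/
theorem statement7 (d : ℕ) (hd : 1 ≤ d) (Λ : Finset (V d)) (h0 : (0 : V d) ∈ Λ)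
    (β : ℝ) (hβ : 0 ≤ β) (J : V d → V d → ℝ)
    (hJ : ∀ u v, 0 ≤ J u v) (hJs : ∀ u v, J u v = J v u)
    (x : V d) (hx : x ∈ Λ) (hxo : x ≠ 0) :
    Real.tanh (β * J 0 x) ≤ corr Λ β J ⟨0, h0⟩ ⟨x, hx⟩ ∧
    corr Λ β J ⟨0, h0⟩ ⟨x, hx⟩ ≤
      ∑ y ∈ Λ.attach,
        if y.1 ≠ 0 then Real.tanh (β * J 0 y.1) * corr Λ β J y ⟨x, hx⟩ else 0 :=
  statement7_general d Λ h0 β hβ J hJ hJs x hx hxo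

end LongRange
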